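/- arXiv:2507.11685 — 4 statements merged into one kernel-verified Lean document; each statement's English description precedes it below -/
import Mathlib

section
/- Let M be an inverse monoid and φ : FreeMonoid (A ⊕ A) → M the monoid homomorphism sending inl a to a chosen generator image g(a) and inr a to g(a)⁻¹. If a word w over A ⊕ A reduces to the empty word under successive deletion of adjacent factors of the form (x, x⁻¹) (i.e., w is a Dyck word), then φ(w) is an idempotent of M. -/
set_option linter.unusedSectionVars false

section Aux
variable {M : Type*} [Monoid M] (ρ : M → M)
    (h1 : ∀ x, x * ρ x * x = x) (h2 : ∀ x, ρ x * x * ρ x = ρ x)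
    (huniq : ∀ x y, x * y * x = x → y * x * y = y → y = ρ x)

include h1 h2 huniq

private lemma dyck_inv_inv (x : M) : ρ (ρ x) = x := (huniq (ρ x) x (h2 x) (h1 x)).symm

private lemma dyck_idem_inv (e : M) (he : e * e = e) : ρ e = e :=
  (huniq e e (by rw [he, he]) (by rw [he, he])).symm

private lemma dyck_idem_right (x : M) : (x * ρ x) * (x * ρ x) = x * ρ x := by
  calc (x * ρ x) * (x * ρ x) = (x * ρ x * x) * ρ x := by simp [mul_assoc]
    _ = x * ρ x := by rw [h1]

private lemma dyck_idem_left (x : M) : (ρ x * x) * (ρ x * x) = ρ x * x := by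
  calc (ρ x * x) * (ρ x * x) = (ρ x * x * ρ x) * x := by simp [mul_assoc]
    _ = ρ x * x := by rw [h2]

/-- product of idempotents is idempotent -/
private lemma dyck_idem_mul (e f : M) (he : e * e = e) (hf : f * f = f) :
    (e * f) * (e * f) = e * f := by
  have hxyx : (e * f) * (f * ρ (e * f) * e) * (e * f) = e * f := by
    calc (e * f) * (f * ρ (e * f) * e) * (e * f)
        = e * (f * f) * ρ (e * f) * (e * e) * f := by simp [mul_assoc]
      _ = e * f * ρ (e * f) * (e * f) := by rw [he, hf]; simp [mul_assoc]
      _ = e * f := h1 (e * f)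
  have hyxy : (f * ρ (e * f) * e) * (e * f) * (f * ρ (e * f) * e)
      = f * ρ (e * f) * e := by
    calc (f * ρ (e * f) * e) * (e * f) * (f * ρ (e * f) * e)
        = f * ρ (e * f) * (e * e) * (f * f) * ρ (e * f) * e := by simp [mul_assoc]
      _ = f * (ρ (e * f) * (e * f) * ρ (e * f)) * e := by
          rw [he, hf]; simp [mul_assoc]
      _ = f * ρ (e * f) * e := by rw [h2]
  have hy : f * ρ (e * f) * e = ρ (e * f) := huniq (e * f) _ hxyx hyxy
  have hρidem : ρ (e * f) * ρ (e * f) = ρ (e * f) := by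
    rw [← hy]
    calc (f * ρ (e * f) * e) * (f * ρ (e * f) * e)
        = f * (ρ (e * f) * (e * f) * ρ (e * f)) * e := by simp [mul_assoc]
      _ = f * ρ (e * f) * e := by rw [h2]
  have hself : e * f = ρ (e * f) :=
    (dyck_inv_inv ρ h1 h2 huniq (e * f)).symm.trans
      (dyck_idem_inv ρ h1 h2 huniq _ hρidem)
  rw [hself]; exact hρidem

private lemma dyck_idem_comm (e f : M) (he : e * e = e) (hf : f * f = f) :
    e * f = f * e := by
  have hef : (e * f) * (e * f) = e * f := dyck_idem_mul ρ h1 h2 huniq e f he hf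
  have hfe : (f * e) * (f * e) = f * e := dyck_idem_mul ρ h1 h2 huniq f e hf he
  have h1' : (e * f) * (f * e) * (e * f) = e * f := by
    calc (e * f) * (f * e) * (e * f) = e * ((f * f) * (e * e)) * f := by simp [mul_assoc]
      _ = (e * f) * (e * f) := by rw [he, hf]; simp [mul_assoc]
      _ = e * f := hef
  have h2' : (f * e) * (e * f) * (f * e) = f * e := by
    calc (f * e) * (e * f) * (f * e) = f * ((e * e) * (f * f)) * e := by simp [mul_assoc]
      _ = (f * e) * (f * e) := by rw [he, hf]; simp [mul_assoc]
      _ = f * e := hfe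
  exact ((huniq (e * f) (f * e) h1' h2').trans
    (dyck_idem_inv ρ h1 h2 huniq _ hef)).symm

/-- sandwich: `p * e * ρ p` is idempotent and `p * e * q = (p * e * ρ p) * (p * q)` -/
private lemma dyck_sandwich (p q e : M) (he : e * e = e) :
    (p * e * ρ p) * (p * e * ρ p) = p * e * ρ p ∧
      p * e * q = (p * e * ρ p) * (p * q) := by
  have hc : e * (ρ p * p) = (ρ p * p) * e :=
    dyck_idem_comm ρ h1 h2 huniq e (ρ p * p) he (dyck_idem_left ρ h1 h2 huniq p)
  constructor
  · calc (p * e * ρ p) * (p * e * ρ p) = p * (e * (ρ p * p)) * (e * ρ p) := by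
          simp [mul_assoc]
      _ = p * ((ρ p * p) * e) * (e * ρ p) := by rw [hc]
      _ = (p * ρ p * p) * ((e * e) * ρ p) := by simp [mul_assoc]
      _ = p * e * ρ p := by rw [h1, he]; simp [mul_assoc]
  · have : (p * e * ρ p) * (p * q) = p * e * q := by
      calc (p * e * ρ p) * (p * q) = p * (e * (ρ p * p)) * q := by simp [mul_assoc]
        _ = p * ((ρ p * p) * e) * q := by rw [hc]
        _ = (p * ρ p * p) * (e * q) := by simp [mul_assoc]
        _ = p * e * q := by rw [h1]; simp [mul_assoc]
    exact this.symm

end Aux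


/-- One step of Dyck reduction: deletion of an adjacent pair of mutually
inverse letters in a word over the doubled alphabet `A ⊕ A`. -/
inductive DyckRedStep {A : Type*} : List (A ⊕ A) → List (A ⊕ A) → Prop
  | inl (u v : List (A ⊕ A)) (a : A) :
      DyckRedStep (u ++ [Sum.inl a, Sum.inr a] ++ v) (u ++ v)
  | inr (u v : List (A ⊕ A)) (a : A) :
      DyckRedStep (u ++ [Sum.inr a, Sum.inl a] ++ v) (u ++ v)

/-- If a word `w` over `A ⊕ A` is a Dyck word (reduces to the empty word), then
its evaluation in an inverse monoid `M` (sending `inl a ↦ g a` and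
`inr a ↦ (g a)⁻¹`) is an idempotent. -/
theorem dyck_word_eval_idempotent {A M : Type*} [Monoid M] (ρ : M → M)
    (h1 : ∀ x, x * ρ x * x = x) (h2 : ∀ x, ρ x * x * ρ x = ρ x)
    (huniq : ∀ x y, x * y * x = x → y * x * y = y → y = ρ x)
    (g : A → M) (w : List (A ⊕ A))
    (hw : Relation.ReflTransGen (DyckRedStep (A := A)) w []) :
    (w.map (Sum.elim g (fun a => ρ (g a)))).prod *
        (w.map (Sum.elim g (fun a => ρ (g a)))).prod =
      (w.map (Sum.elim g (fun a => ρ (g a)))).prod := by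
  set E : A ⊕ A → M := Sum.elim g (fun a => ρ (g a)) with hE
  have key : ∀ v w' : List (A ⊕ A), DyckRedStep v w' →
      ∃ e : M, e * e = e ∧ (v.map E).prod = e * ((w'.map E).prod) := by
    rintro v w' (⟨u, t, a⟩ | ⟨u, t, a⟩)
    · obtain ⟨hid, heq⟩ := dyck_sandwich ρ h1 h2 huniq ((u.map E).prod)
        ((t.map E).prod) (g a * ρ (g a)) (dyck_idem_right ρ h1 h2 huniq (g a))
      refine ⟨_, hid, ?_⟩
      simp only [List.map_append, List.prod_append, List.map_cons, List.map_nil,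
        List.prod_cons, List.prod_nil, mul_one, hE, Sum.elim_inl, Sum.elim_inr]
      exact heq
    · obtain ⟨hid, heq⟩ := dyck_sandwich ρ h1 h2 huniq ((u.map E).prod)
        ((t.map E).prod) (ρ (g a) * g a) (dyck_idem_left ρ h1 h2 huniq (g a))
      refine ⟨_, hid, ?_⟩
      simp only [List.map_append, List.prod_append, List.map_cons, List.map_nil,
        List.prod_cons, List.prod_nil, mul_one, hE, Sum.elim_inl, Sum.elim_inr]
      exact heq
  induction hw using Relation.ReflTransGen.head_induction_on with
  | refl => simp
  | head hstep _ ih =>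
      obtain ⟨e, hee, heq⟩ := key _ _ hstep
      rw [heq]
      exact dyck_idem_mul ρ h1 h2 huniq _ _ hee ih
end

section
/- The free group on any set A extends every A-generated inverse monoid: if M is an inverse monoid with a map g : A → M, and a word w over A ∪ A⁻¹ evaluates to the identity in the free group F(A), then the corresponding product in M (with letters a sent to g(a) and a⁻¹ to g(a)⁻¹) is an idempotent of M. -/
section InverseMonoidAux

variable {M : Type*} [Monoid M] {ρ : M → M}

private lemma fgeim_ic {e : M} (he : e * e = e) (t : M) : e * (e * t) = e * t := by
  rw [← mul_assoc, he]

/-- product of two idempotents is idempotent (uses uniqueness of inverses). -/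
private lemma fgeim_idem_mul
    (h1 : ∀ x, x * ρ x * x = x) (h2 : ∀ x, ρ x * x * ρ x = ρ x)
    (huniq : ∀ x y, x * y * x = x → y * x * y = y → y = ρ x)
    {e f : M} (he : e * e = e) (hf : f * f = f) :
    (e * f) * (e * f) = e * f := by
  set x := ρ (e * f) with hxdef
  have hx1 : e * (f * (x * (e * f))) = e * f := by
    have := h1 (e * f); simpa only [mul_assoc] using this
  have hx2 : ∀ t : M, x * (e * (f * (x * t))) = x * t := by
    intro t
    have := congrArg (· * t) (h2 (e * f))
    simpa only [mul_assoc] using this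
  have hfxe : f * (x * e) = x := by
    have c1 : (e * f) * (f * (x * e)) * (e * f) = e * f := by
      simp only [mul_assoc, fgeim_ic hf, fgeim_ic he]
      exact hx1
    have c2 : (f * (x * e)) * (e * f) * (f * (x * e)) = f * (x * e) := by
      simp only [mul_assoc, fgeim_ic he, fgeim_ic hf]
      rw [hx2 e]
    have := huniq (e * f) (f * (x * e)) (by simpa only [mul_assoc] using c1)
      (by simpa only [mul_assoc] using c2)
    exact this
  have hxx : x * x = x := by
    conv_lhs => rw [← hfxe]
    simp only [mul_assoc]
    rw [hx2 e]
    exact hfxe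
  have hxrho : x = ρ x := huniq x x (by rw [hxx, hxx]) (by rw [hxx, hxx])
  have hefrho : e * f = ρ x := by
    refine huniq x (e * f) ?_ ?_
    · have := h2 (e * f); simpa only [← hxdef] using this
    · exact h1 (e * f)
  have : e * f = x := by rw [hefrho, ← hxrho]
  rw [this, hxx]

private lemma fgeim_idem_comm
    (h1 : ∀ x, x * ρ x * x = x) (h2 : ∀ x, ρ x * x * ρ x = ρ x)
    (huniq : ∀ x y, x * y * x = x → y * x * y = y → y = ρ x)
    {e f : M} (he : e * e = e) (hf : f * f = f) :
    e * f = f * e := by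
  have hef := fgeim_idem_mul h1 h2 huniq he hf
  have hfe := fgeim_idem_mul h1 h2 huniq hf he
  have H1 : (e * f) * (f * e) * (e * f) = e * f := by
    simp only [mul_assoc, fgeim_ic hf, fgeim_ic he]
    simpa only [mul_assoc] using hef
  have H2 : (f * e) * (e * f) * (f * e) = f * e := by
    simp only [mul_assoc, fgeim_ic he, fgeim_ic hf]
    simpa only [mul_assoc] using hfe
  have hA : f * e = ρ (e * f) := huniq (e * f) (f * e) H1 H2
  have hB : e * f = ρ (e * f) := huniq (e * f) (e * f) (by rw [hef, hef]) (by rw [hef, hef])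
  rw [hB, ← hA]

/-- `ρ x * x` is idempotent. -/
private lemma fgeim_rr (h2 : ∀ x, ρ x * x * ρ x = ρ x) (x : M) :
    (ρ x * x) * (ρ x * x) = ρ x * x := by
  calc (ρ x * x) * (ρ x * x) = (ρ x * x * ρ x) * x := by simp only [mul_assoc]
    _ = ρ x * x := by rw [h2]

/-- `x * ρ x` is idempotent. -/
private lemma fgeim_ll (h1 : ∀ x, x * ρ x * x = x) (x : M) :
    (x * ρ x) * (x * ρ x) = x * ρ x := by
  calc (x * ρ x) * (x * ρ x) = (x * ρ x * x) * ρ x := by simp only [mul_assoc]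
    _ = x * ρ x := by rw [h1]

/-- sandwich lemma : if `p*q` and `e` are idempotent then so is `p*e*q`. -/
private lemma fgeim_sandwich
    (h1 : ∀ x, x * ρ x * x = x) (h2 : ∀ x, ρ x * x * ρ x = ρ x)
    (huniq : ∀ x y, x * y * x = x → y * x * y = y → y = ρ x)
    {p q e : M} (hpq : (p * q) * (p * q) = p * q) (he : e * e = e) :
    (p * (e * q)) * (p * (e * q)) = p * (e * q) := by
  -- rewrite p * e * q = (p * e * ρ p) * (p * q)
  have comm' : ∀ t : M, (ρ p * p) * (e * t) = e * ((ρ p * p) * t) := by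
    intro t
    rw [← mul_assoc, ← fgeim_idem_comm h1 h2 huniq he (fgeim_rr h2 p), mul_assoc]
  have hconj : (p * (e * ρ p)) * (p * (e * ρ p)) = p * (e * ρ p) := by
    calc (p * (e * ρ p)) * (p * (e * ρ p))
        = p * (e * ((ρ p * p) * (e * ρ p))) := by simp only [mul_assoc]
      _ = p * (e * (e * ((ρ p * p) * ρ p))) := by rw [comm' (ρ p)]
      _ = p * (e * ((ρ p * p) * ρ p)) := by rw [fgeim_ic he]
      _ = p * (e * ρ p) := by rw [show (ρ p * p) * ρ p = ρ p from by
            simpa only [mul_assoc] using h2 p]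
  have key : p * (e * q) = (p * (e * ρ p)) * (p * q) := by
    calc p * (e * q) = (p * (ρ p * p)) * (e * q) := by
          rw [show p * (ρ p * p) = p from by simpa only [mul_assoc] using h1 p]
      _ = p * ((ρ p * p) * (e * q)) := by rw [mul_assoc]
      _ = p * (e * ((ρ p * p) * q)) := by rw [comm' q]
      _ = (p * (e * ρ p)) * (p * q) := by simp only [mul_assoc]
  rw [key]
  exact fgeim_idem_mul h1 h2 huniq hconj hpq

end InverseMonoidAux

section FreeGroupAux

variable {A : Type*}

/-- letters to generator pairs. -/
private def fgeim_toP : A ⊕ A → A × Bool := Sum.elim (fun a => (a, true)) (fun a => (a, false))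

private lemma fgeim_prod_eq_mk (w : List (A ⊕ A)) :
    (w.map (Sum.elim (fun a => FreeGroup.of a)
        (fun a => (FreeGroup.of a)⁻¹))).prod = FreeGroup.mk (w.map fgeim_toP) := by
  induction w with
  | nil => simp [FreeGroup.one_eq_mk]
  | cons x t ih =>
      rw [List.map_cons, List.prod_cons, ih, List.map_cons]
      rcases x with a | a
      · rw [Sum.elim_inl,
          show (FreeGroup.of a : FreeGroup A) = FreeGroup.mk [(a, true)] from rfl,
          FreeGroup.mul_mk]
        rfl
      · have hinv : (FreeGroup.of a : FreeGroup A)⁻¹ = FreeGroup.mk [(a, false)] := by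
          rw [show (FreeGroup.of a : FreeGroup A) = FreeGroup.mk [(a, true)] from rfl,
            FreeGroup.inv_mk]
          rfl
        rw [Sum.elim_inr, hinv, FreeGroup.mul_mk]
        rfl

private lemma fgeim_step_decomp {L L' : List (A × Bool)} (h : FreeGroup.Red.Step L L') :
    ∃ (u v : List (A × Bool)) (x : A) (b : Bool),
      L = u ++ (x, b) :: (x, !b) :: v ∧ L' = u ++ v := by
  cases h with
  | @not u v x b => exact ⟨u, v, x, b, rfl, rfl⟩

end FreeGroupAux

/-- The free group on `A` extends every `A`-generated inverse monoid: if a word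
over `A ∪ A⁻¹` evaluates to `1` in the free group `F(A)`, then its evaluation
in an inverse monoid `M` (via `g : A → M`) is an idempotent. -/
theorem free_group_extends_inverse_monoid {A M : Type*} [Monoid M] (ρ : M → M)
    (h1 : ∀ x, x * ρ x * x = x) (h2 : ∀ x, ρ x * x * ρ x = ρ x)
    (huniq : ∀ x y, x * y * x = x → y * x * y = y → y = ρ x)
    (g : A → M) (w : List (A ⊕ A))
    (hF : (w.map (Sum.elim (fun a => FreeGroup.of a)
        (fun a => (FreeGroup.of a)⁻¹))).prod = (1 : FreeGroup A)) :
    (w.map (Sum.elim g (fun a => ρ (g a)))).prod *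
        (w.map (Sum.elim g (fun a => ρ (g a)))).prod =
      (w.map (Sum.elim g (fun a => ρ (g a)))).prod := by
  -- convert hF to a reduction statement
  rw [fgeim_prod_eq_mk, FreeGroup.one_eq_mk] at hF
  have hred : FreeGroup.Red (w.map fgeim_toP) [] := by
    rcases FreeGroup.Red.exact.1 hF with ⟨c, hc1, hc2⟩
    rwa [FreeGroup.Red.nil_iff.1 hc2] at hc1
  clear hF
  set val : A ⊕ A → M := Sum.elim g (fun a => ρ (g a)) with hval
  -- strong induction on length
  suffices H : ∀ n (w : List (A ⊕ A)), w.length ≤ n →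
      FreeGroup.Red (w.map fgeim_toP) [] →
      (w.map val).prod * (w.map val).prod = (w.map val).prod from
    H w.length w le_rfl hred
  intro n
  induction n with
  | zero =>
      intro w hw _
      have h : w = [] := List.length_eq_zero_iff.1 (Nat.le_zero.1 hw)
      subst h; simp
  | succ n ih =>
      intro w hw hred
      rcases Relation.ReflTransGen.cases_head hred with heq | ⟨L', hstep, hred'⟩
      · have hwnil : w = [] := by simpa using heq
        subst hwnil; simp
      rcases fgeim_step_decomp hstep with ⟨u, v, x, b, hL, hL'⟩
      -- decompose w along the map equality
      rcases List.map_eq_append_iff.1 hL with ⟨w₁, w₂, hw12, hmap1, hmap2⟩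
      rcases List.map_eq_cons_iff.1 hmap2 with ⟨s1, t1, hw2, hs1, hmap3⟩
      rcases List.map_eq_cons_iff.1 hmap3 with ⟨s2, w₃, ht1, hs2, hmap4⟩
      subst hw12 hw2 ht1
      -- inner word reduces to 1
      have hred2 : FreeGroup.Red ((w₁ ++ w₃).map fgeim_toP) [] := by
        rw [List.map_append, hmap1, hmap4, ← hL']
        exact hred'
      have hlen : (w₁ ++ w₃).length ≤ n := by
        have := hw
        simp only [List.length_append, List.length_cons] at this ⊢
        omega
      have hPQ := ih (w₁ ++ w₃) hlen hred2
      rw [List.map_append, List.prod_append] at hPQ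
      -- value of the middle pair is idempotent
      have hmid : (val s1 * val s2) * (val s1 * val s2) = val s1 * val s2 := by
        cases b with
        | true =>
            have hs1' : s1 = Sum.inl x := by
              cases s1 with
              | inl a => simp [fgeim_toP] at hs1; simp [hs1]
              | inr a => simp [fgeim_toP] at hs1
            have hs2' : s2 = Sum.inr x := by
              cases s2 with
              | inl a => simp [fgeim_toP] at hs2
              | inr a => simp [fgeim_toP] at hs2; simp [hs2]
            subst hs1' hs2'
            simpa [hval] using fgeim_ll h1 (g x)
        | false =>
            have hs1' : s1 = Sum.inr x := by
              cases s1 with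
              | inl a => simp [fgeim_toP] at hs1
              | inr a => simp [fgeim_toP] at hs1; simp [hs1]
            have hs2' : s2 = Sum.inl x := by
              cases s2 with
              | inl a => simp [fgeim_toP] at hs2; simp [hs2]
              | inr a => simp [fgeim_toP] at hs2
            subst hs1' hs2'
            simpa [hval] using fgeim_rr h2 (g x)
      -- assemble
      have hform : ((w₁ ++ s1 :: s2 :: w₃).map val).prod
          = (w₁.map val).prod * ((val s1 * val s2) * (w₃.map val).prod) := by
        simp [List.prod_append, mul_assoc]
      rw [hform]
      simpa only [mul_assoc] using
        fgeim_sandwich h1 h2 huniq hPQ hmid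
end

section
/- Let Q be a group with a generating map i : A → Q, and define the Margolis–Meakin data as pairs (K, g) where g ∈ Q and K is a finite set of 'geometric edges' of the Cayley graph of Q (elements of Q × A) such that the subgraph spanned by K together with the vertices 1 and g is connected and contains 1 and g. With multiplication (K, g)(L, h) = (K ∪ gL, gh), where gL = {(g·q, a) : (q, a) ∈ L}, and inversion (K, g)⁻¹ = (g⁻¹K, g⁻¹), this forms an inverse monoid with identity (∅, 1). -/
/-- Adjacency relation on the Cayley graph of `Q` induced by a set of
positive edges `K ⊆ Q × A` (edge `(q, a)` joins `q` and `q * i a`). -/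
def MMRel {Q A : Type*} [Group Q] (i : A → Q) (K : Finset (Q × A)) (q q' : Q) : Prop :=
  ∃ a, ((q, a) ∈ K ∧ q' = q * i a) ∨ ((q', a) ∈ K ∧ q = q' * i a)

/-- Vertex set of the subgraph spanned by the edge set `K` together with the
vertices `1` and `g`. -/
def MMVtx {Q A : Type*} [Group Q] (i : A → Q) (K : Finset (Q × A)) (g : Q) : Set Q :=
  ({1, g} : Set Q) ∪ {q | ∃ a, (q, a) ∈ K} ∪ {v | ∃ q a, (q, a) ∈ K ∧ v = q * i a}

/-- The subgraph spanned by `K` with the vertices `1` and `g` is connected. -/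
def MMConn {Q A : Type*} [Group Q] (i : A → Q) (K : Finset (Q × A)) (g : Q) : Prop :=
  ∀ v ∈ MMVtx i K g, Relation.ReflTransGen (MMRel i K) 1 v

/-- The carrier of the Margolis–Meakin expansion: pairs `(K, g)` such that the
spanned subgraph of the Cayley graph is connected and contains `1` and `g`. -/
def MM {Q A : Type*} [Group Q] (i : A → Q) : Type _ :=
  {p : Finset (Q × A) × Q // MMConn i p.1 p.2}

/-- Raw multiplication `(K, g)(L, h) = (K ∪ gL, gh)`. -/
def MMpmul {Q A : Type*} [Group Q] [DecidableEq Q] [DecidableEq A]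
    (p q : Finset (Q × A) × Q) : Finset (Q × A) × Q :=
  (p.1 ∪ q.1.image (fun e => (p.2 * e.1, e.2)), p.2 * q.2)

/-- Raw inversion `(K, g)⁻¹ = (g⁻¹K, g⁻¹)`. -/
def MMpinv {Q A : Type*} [Group Q] [DecidableEq Q] [DecidableEq A]
    (p : Finset (Q × A) × Q) : Finset (Q × A) × Q :=
  (p.1.image (fun e => (p.2⁻¹ * e.1, e.2)), p.2⁻¹)

/-!
Left multiplication by `g` is an automorphism of the Cayley graph, so translating a connected
subgraph keeps it connected. A pair `(K, g)` is connected exactly when `g` and the initial vertex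
of every edge of `K` are reachable from `1` inside `K`: then `K ∪ gL` is connected through the
vertex `g`, and `g⁻¹K` through `g⁻¹ g = 1`. The monoid laws reduce to `g(K ∪ L) = gK ∪ gL` and
`g(hK) = (gh)K`. If `xyx = x` and `yxy = y` for `x = (K, g)`, `y = (L, h)`, then `ghg = g` forces
`h = g⁻¹`, and the first coordinates give `gL ⊆ K` and `g⁻¹K ⊆ L`, so `y = x⁻¹`.
-/

def translateEdges {Q A : Type*} [Group Q] [DecidableEq Q] [DecidableEq A]
    (g : Q) (K : Finset (Q × A)) : Finset (Q × A) :=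
  K.image fun e => (g * e.1, e.2)

section Translate

variable {Q A : Type*} [Group Q] [DecidableEq Q] [DecidableEq A]

@[simp]
lemma translateEdges_empty (g : Q) : translateEdges g (∅ : Finset (Q × A)) = ∅ :=
  Finset.image_empty _

@[simp]
lemma translateEdges_one (K : Finset (Q × A)) : translateEdges 1 K = K := by
  simp [translateEdges]

@[simp]
lemma translateEdges_translateEdges (g h : Q) (K : Finset (Q × A)) :
    translateEdges g (translateEdges h K) = translateEdges (g * h) K := by
  simp [translateEdges, Finset.image_image, Function.comp_def, mul_assoc]

@[simp]
lemma translateEdges_union (g : Q) (K L : Finset (Q × A)) :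
    translateEdges g (K ∪ L) = translateEdges g K ∪ translateEdges g L :=
  Finset.image_union _ _

lemma translateEdges_mono (g : Q) {K L : Finset (Q × A)} (h : K ⊆ L) :
    translateEdges g K ⊆ translateEdges g L :=
  Finset.image_subset_image h

lemma mem_translateEdges_of_mem (g : Q) {K : Finset (Q × A)} {e : Q × A} (he : e ∈ K) :
    (g * e.1, e.2) ∈ translateEdges g K :=
  Finset.mem_image_of_mem _ he

lemma subset_translateEdges_iff {g : Q} {K L : Finset (Q × A)} :
    K ⊆ translateEdges g L ↔ translateEdges g⁻¹ K ⊆ L := by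
  constructor <;> intro h
  · simpa using translateEdges_mono g⁻¹ h
  · simpa using translateEdges_mono g h

end Translate

section Connectivity

variable {Q A : Type*} [Group Q] {i : A → Q} {K L : Finset (Q × A)}

lemma mmRel_of_mem {q : Q} {a : A} (h : (q, a) ∈ K) : MMRel i K q (q * i a) :=
  ⟨a, Or.inl ⟨h, rfl⟩⟩

lemma MMRel.mono (hKL : K ⊆ L) {q q' : Q} : MMRel i K q q' → MMRel i L q q'
  | ⟨a, Or.inl ⟨h, e⟩⟩ => ⟨a, Or.inl ⟨hKL h, e⟩⟩
  | ⟨a, Or.inr ⟨h, e⟩⟩ => ⟨a, Or.inr ⟨hKL h, e⟩⟩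

instance : Std.Symm (MMRel i K) where
  symm _ _ := fun ⟨a, h⟩ => ⟨a, h.symm⟩

variable [DecidableEq Q] [DecidableEq A]

lemma MMRel.translate (g : Q) {q q' : Q} :
    MMRel i K q q' → MMRel i (translateEdges g K) (g * q) (g * q')
  | ⟨a, Or.inl ⟨h, e⟩⟩ =>
    ⟨a, Or.inl ⟨mem_translateEdges_of_mem g h, by rw [e, mul_assoc]⟩⟩
  | ⟨a, Or.inr ⟨h, e⟩⟩ =>
    ⟨a, Or.inr ⟨mem_translateEdges_of_mem g h, by rw [e, mul_assoc]⟩⟩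

lemma reflTransGen_mmRel_translateEdges (g : Q) {q q' : Q}
    (h : Relation.ReflTransGen (MMRel i K) q q') :
    Relation.ReflTransGen (MMRel i (translateEdges g K)) (g * q) (g * q') :=
  Relation.ReflTransGen.lift (g * ·) (fun _ _ => MMRel.translate g) _ _ h

omit [DecidableEq Q] [DecidableEq A] in
lemma reflTransGen_mmRel_mono (hKL : K ⊆ L) {q q' : Q}
    (h : Relation.ReflTransGen (MMRel i K) q q') :
    Relation.ReflTransGen (MMRel i L) q q' :=
  Relation.ReflTransGen.mono (fun _ _ => MMRel.mono hKL) _ _ h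

omit [DecidableEq Q] [DecidableEq A] in
lemma mmConn_iff {g : Q} :
    MMConn i K g ↔ Relation.ReflTransGen (MMRel i K) 1 g ∧
      ∀ e ∈ K, Relation.ReflTransGen (MMRel i K) 1 e.1 := by
  refine ⟨fun h => ⟨h g (Or.inl (Or.inl (Or.inr rfl))),
    fun e he => h e.1 (Or.inl (Or.inr ⟨e.2, he⟩))⟩, fun ⟨hg, hK⟩ v hv => ?_⟩
  rcases hv with ((rfl | rfl) | ⟨a, hv⟩) | ⟨q, a, hv, rfl⟩
  · rfl
  · exact hg
  · exact hK _ hv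
  · exact (hK _ hv).tail (mmRel_of_mem hv)

omit [DecidableEq Q] [DecidableEq A] in
lemma mmConn_empty_one : MMConn i (∅ : Finset (Q × A)) 1 :=
  mmConn_iff.2 ⟨.refl, by simp⟩

lemma MMConn.pmul {g h : Q} (hK : MMConn i K g) (hL : MMConn i L h) :
    MMConn i (K ∪ translateEdges g L) (g * h) := by
  obtain ⟨hKg, hKe⟩ := mmConn_iff.1 hK
  obtain ⟨hLh, hLe⟩ := mmConn_iff.1 hL
  -- every vertex of `gL` is reached from `1` by first walking to `g = g * 1` inside `K`
  have via_g : ∀ {w}, Relation.ReflTransGen (MMRel i L) 1 w →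
      Relation.ReflTransGen (MMRel i (K ∪ translateEdges g L)) 1 (g * w) := fun hw =>
    (reflTransGen_mmRel_mono Finset.subset_union_left hKg).trans <| by
      simpa using reflTransGen_mmRel_mono Finset.subset_union_right
        (reflTransGen_mmRel_translateEdges g hw)
  refine mmConn_iff.2 ⟨via_g hLh, fun e he => ?_⟩
  rcases Finset.mem_union.1 he with he | he
  · exact reflTransGen_mmRel_mono Finset.subset_union_left (hKe e he)
  · obtain ⟨f, hf, rfl⟩ := Finset.mem_image.1 he
    exact via_g (hLe f hf)

lemma MMConn.pinv {g : Q} (hK : MMConn i K g) : MMConn i (translateEdges g⁻¹ K) g⁻¹ := by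
  obtain ⟨hKg, hKe⟩ := mmConn_iff.1 hK
  have from_g : ∀ {w}, Relation.ReflTransGen (MMRel i K) 1 w →
      Relation.ReflTransGen (MMRel i (translateEdges g⁻¹ K)) 1 (g⁻¹ * w) := fun hw => by
    simpa using reflTransGen_mmRel_translateEdges g⁻¹ ((symm hKg).trans hw)
  refine mmConn_iff.2 ⟨by simpa using from_g .refl, fun e he => ?_⟩
  obtain ⟨f, hf, rfl⟩ := Finset.mem_image.1 he
  exact from_g (hKe f hf)

end Connectivity

section RawLaws

variable {Q A : Type*} [Group Q] [DecidableEq Q] [DecidableEq A]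

lemma MMpmul_eq (p q : Finset (Q × A) × Q) :
    MMpmul p q = (p.1 ∪ translateEdges p.2 q.1, p.2 * q.2) := rfl

lemma MMpinv_eq (p : Finset (Q × A) × Q) :
    MMpinv p = (translateEdges p.2⁻¹ p.1, p.2⁻¹) := rfl

lemma MMpmul_assoc (p q r : Finset (Q × A) × Q) :
    MMpmul (MMpmul p q) r = MMpmul p (MMpmul q r) := by
  simp only [MMpmul_eq, translateEdges_union,
    translateEdges_translateEdges, Finset.union_assoc, mul_assoc]

lemma MMpmul_empty_one (p : Finset (Q × A) × Q) : MMpmul p (∅, 1) = p := by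
  simp [MMpmul_eq]

lemma empty_one_MMpmul (p : Finset (Q × A) × Q) : MMpmul (∅, 1) p = p := by
  simp only [MMpmul_eq, translateEdges_one, Finset.empty_union, one_mul]

lemma MMpmul_MMpinv_MMpmul (p : Finset (Q × A) × Q) :
    MMpmul (MMpmul p (MMpinv p)) p = p := by
  simp [MMpmul_eq, MMpinv_eq]

lemma MMpmul_MMpmul_MMpinv (p : Finset (Q × A) × Q) :
    MMpmul (MMpmul (MMpinv p) p) (MMpinv p) = MMpinv p := by
  simp [MMpmul_eq, MMpinv_eq]

lemma eq_MMpinv_of_MMpmul_eq {p q : Finset (Q × A) × Q}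
    (hp : MMpmul (MMpmul p q) p = p) (hq : MMpmul (MMpmul q p) q = q) : q = MMpinv p := by
  obtain ⟨K, g⟩ := p
  obtain ⟨L, h⟩ := q
  simp only [MMpmul_eq, MMpinv_eq, Prod.mk.injEq] at hp hq ⊢
  obtain ⟨hK, hg⟩ := hp
  obtain ⟨hL, -⟩ := hq
  have h_eq : h = g⁻¹ := eq_inv_of_mul_eq_one_right (mul_eq_right.1 hg)
  subst h_eq
  have hgL : translateEdges g L ⊆ K :=
    hK ▸ Finset.subset_union_right.trans Finset.subset_union_left
  have hgK : translateEdges g⁻¹ K ⊆ L :=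
    hL ▸ Finset.subset_union_right.trans Finset.subset_union_left
  exact ⟨(subset_translateEdges_iff.2 (by simpa using hgL)).antisymm hgK, rfl⟩

end RawLaws

/-- The Margolis–Meakin data with multiplication `(K,g)(L,h) = (K ∪ gL, gh)`
and inversion `(K,g)⁻¹ = (g⁻¹K, g⁻¹)` forms an inverse monoid with identity
`(∅, 1)`. -/
theorem margolis_meakin_inverse_monoid {Q A : Type*}
    [Group Q] [DecidableEq Q] [DecidableEq A] (i : A → Q) :
    ∃ (mul : MM i → MM i → MM i) (inv : MM i → MM i) (one : MM i),
      (∀ x y, (mul x y).val = MMpmul x.val y.val) ∧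
      (∀ x, (inv x).val = MMpinv x.val) ∧
      one.val = (∅, 1) ∧
      (∀ x y z, mul (mul x y) z = mul x (mul y z)) ∧
      (∀ x, mul one x = x) ∧
      (∀ x, mul x one = x) ∧
      (∀ x, mul (mul x (inv x)) x = x) ∧
      (∀ x, mul (mul (inv x) x) (inv x) = inv x) ∧
      (∀ x y, mul (mul x y) x = x → mul (mul y x) y = y → y = inv x) := by
  refine ⟨fun x y => ⟨MMpmul x.val y.val, x.2.pmul y.2⟩, fun x => ⟨MMpinv x.val, x.2.pinv⟩,
    ⟨(∅, 1), mmConn_empty_one⟩, fun _ _ => rfl, fun _ => rfl, rfl,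
    fun x y z => Subtype.ext (MMpmul_assoc x.1 y.1 z.1),
    fun x => Subtype.ext (empty_one_MMpmul x.1),
    fun x => Subtype.ext (MMpmul_empty_one x.1),
    fun x => Subtype.ext (MMpmul_MMpinv_MMpmul x.1),
    fun x => Subtype.ext (MMpmul_MMpmul_MMpinv x.1),
    fun x y hx hy => Subtype.ext (eq_MMpinv_of_MMpmul_eq (congrArg Subtype.val hx)
      (congrArg Subtype.val hy))⟩
end

section
/- Let Γ be a finite connected multigraph with edge involution, G a group, N ⊴ G a normal subgroup, and x : K → G an edge labelling with x(k⁻¹) = x(k)⁻¹ such that for every closed path k₁⋯kₜ the product x(k₁)⋯x(kₜ) lies in N. Then there exists a relabelling y : K → G with y(k⁻¹) = y(k)⁻¹, y(k) ∈ x(k)·N for every edge k, and y(k₁)⋯y(kₜ) = 1 for every closed path k₁⋯kₜ. -/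
namespace RelabelAux

variable {V K G : Type*} [Group G]

inductive IsTrail (α ω : K → V) : List K → V → V → Prop
  | nil (v : V) : IsTrail α ω [] v v
  | cons (k : K) {l : List K} {v : V} : IsTrail α ω l (ω k) v →
      IsTrail α ω (k :: l) (α k) v

variable {α ω : K → V}

theorem IsTrail.append {l l' : List K} {u v w : V}
    (h : IsTrail α ω l u v) (h' : IsTrail α ω l' v w) :
    IsTrail α ω (l ++ l') u w := by
  induction h with
  | nil => simpa using h'
  | cons k h ih => exact .cons k (ih h')

theorem IsTrail.head_eq {k : K} {l : List K} {u v : V}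
    (h : IsTrail α ω (k :: l) u v) : u = α k := by
  cases h; rfl

theorem IsTrail.chain' {l : List K} {u v : V} (h : IsTrail α ω l u v) :
    List.Chain' (fun a b => ω a = α b) l := by
  induction h with
  | nil => simp [List.Chain']
  | @cons k l v h ih =>
    cases l with
    | nil => simp [List.Chain']
    | cons k' l' => exact List.isChain_cons_cons.mpr ⟨h.head_eq, ih⟩

theorem IsTrail.getLast_eq {k : K} {l : List K} {u v : V}
    (h : IsTrail α ω (k :: l) u v) : ω ((k :: l).getLast (by simp)) = v := by
  induction l generalizing k u with
  | nil => cases h with | cons k h => cases h; rfl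
  | cons k' l' ih =>
    cases h with
    | cons k h =>
      have := ih h
      simpa [List.getLast] using this

theorem isTrail_of_chain' {k : K} {l : List K}
    (h : List.Chain' (fun a b => ω a = α b) (k :: l)) :
    IsTrail α ω (k :: l) (α k) (ω ((k :: l).getLast (by simp))) := by
  induction l generalizing k with
  | nil => exact .cons k (.nil _)
  | cons k' l' ih =>
    rcases List.isChain_cons_cons.mp h with ⟨h1, h2⟩
    have := ih h2
    rw [← h1] at this
    have t := IsTrail.cons (α := α) (ω := ω) k this
    simpa [List.getLast] using t

theorem exists_trail (hconn : ∀ u v : V,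
    Relation.ReflTransGen (fun a b => ∃ k, α k = a ∧ ω k = b) u v) (u v : V) :
    ∃ l, IsTrail α ω l u v := by
  induction hconn u v with
  | refl => exact ⟨[], .nil u⟩
  | tail _ h ih =>
    obtain ⟨l, hl⟩ := ih
    obtain ⟨k, hk1, hk2⟩ := h
    refine ⟨l ++ [k], hl.append ?_⟩
    rw [← hk1, ← hk2]
    exact .cons k (.nil _)

theorem IsTrail.reverse (einv : K → K)
    (h_invol : ∀ k, einv (einv k) = k) (h_α : ∀ k, α (einv k) = ω k)
    {l : List K} {u v : V} (h : IsTrail α ω l u v) :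
    IsTrail α ω ((l.map einv).reverse) v u := by
  have h_ω : ∀ k, ω (einv k) = α k := by
    intro k; conv_rhs => rw [← h_invol k]
    exact (h_α (einv k)).symm
  induction h with
  | nil => exact .nil _
  | @cons k l v h ih =>
    have e1 : IsTrail α ω [einv k] (ω k) (α k) := by
      have := IsTrail.cons (α := α) (ω := ω) (einv k) (.nil (ω (einv k)))
      rwa [h_α k, h_ω k] at this
    simpa using ih.append e1

theorem prod_reverse_inv (einv : K → K) (x : K → G)
    (hx_inv : ∀ k, x (einv k) = (x k)⁻¹) (l : List K) :
    (((l.map einv).reverse).map x).prod = ((l.map x).prod)⁻¹ := by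
  induction l with
  | nil => simp
  | cons k l ih =>
    simp only [List.map_cons, List.reverse_cons, List.map_append, List.prod_append,
      List.map_nil, List.prod_cons, List.prod_nil, mul_one, ih, hx_inv k, mul_inv_rev]

end RelabelAux

open RelabelAux in
/-- If all cycle products of an edge labelling `x` of a finite connected
multigraph lie in a normal subgroup `N ⊴ G`, then there is a relabelling `y`
with `y(k⁻¹) = y(k)⁻¹`, `y(k) ∈ x(k)·N` for every edge, and all cycle
products of `y` equal to `1`. -/
theorem relabelling_within_cosets {V K G : Type*} [Finite V] [Finite K] [Group G]
    (α ω : K → V) (einv : K → K)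
    (h_ne : ∀ k, einv k ≠ k) (h_invol : ∀ k, einv (einv k) = k)
    (h_α : ∀ k, α (einv k) = ω k)
    (hconn : ∀ u v : V, Relation.ReflTransGen (fun a b => ∃ k, α k = a ∧ ω k = b) u v)
    (N : Subgroup G) [N.Normal]
    (x : K → G) (hx_inv : ∀ k, x (einv k) = (x k)⁻¹)
    (hcyc : ∀ (e : K) (l : List K),
      List.Chain' (fun a b => ω a = α b) (e :: l) →
      ω ((e :: l).getLast (by simp)) = α e →
      ((e :: l).map x).prod ∈ N) :
    ∃ y : K → G, (∀ k, y (einv k) = (y k)⁻¹) ∧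
      (∀ k, (x k)⁻¹ * y k ∈ N) ∧
      (∀ (e : K) (l : List K),
        List.Chain' (fun a b => ω a = α b) (e :: l) →
        ω ((e :: l).getLast (by simp)) = α e →
        ((e :: l).map y).prod = 1) := by
  rcases isEmpty_or_nonempty K with hK | hK
  · exact ⟨fun _ => 1, fun k => (hK.false k).elim, fun k => (hK.false k).elim,
      fun e _ _ _ => (hK.false e).elim⟩
  have h_ω : ∀ k, ω (einv k) = α k := by
    intro k; conv_rhs => rw [← h_invol k]
    exact (h_α (einv k)).symm
  obtain ⟨k₀⟩ := hK
  set v₀ := α k₀ with hv₀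
  -- closed trail products lie in N
  have hclosed : ∀ (l : List K) (v : V), IsTrail α ω l v v → ((l.map x).prod) ∈ N := by
    intro l v hl
    cases l with
    | nil => simpa using N.one_mem
    | cons e l' =>
      have h1 := hl.chain'
      have h2 := hl.getLast_eq
      have h3 := hl.head_eq
      exact hcyc e l' h1 (by rw [h2, h3])
  -- two trails with the same endpoints give congruent products
  have htwo : ∀ (l l' : List K) (u v : V), IsTrail α ω l u v → IsTrail α ω l' u v →
      ((l.map x).prod)⁻¹ * (l'.map x).prod ∈ N := by
    intro l l' u v hl hl'
    have := hclosed _ _ (((hl.reverse einv h_invol h_α)).append hl')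
    rwa [List.map_append, List.prod_append, prod_reverse_inv einv x hx_inv] at this
  -- choose a trail to each vertex
  choose p hp using fun v => exists_trail hconn v₀ v
  set g : V → G := fun v => ((p v).map x).prod with hg
  refine ⟨fun k => (g (α k))⁻¹ * g (ω k), ?_, ?_, ?_⟩
  · intro k
    simp [h_α, h_ω, mul_comm]
  · intro k
    have hk : IsTrail α ω (p (α k) ++ [k]) v₀ (ω k) := by
      refine (hp (α k)).append ?_
      exact .cons k (.nil _)
    have := htwo _ _ _ _ hk (hp (ω k))
    simpa [hg, mul_assoc] using this
  · intro e l hch hlast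
    have ht := isTrail_of_chain' (α := α) (ω := ω) hch
    rw [hlast] at ht
    -- telescoping: product of y along a trail from u to v is g u⁻¹ * g v
    have htel : ∀ (l : List K) (u v : V), IsTrail α ω l u v →
        ((l.map fun k => (g (α k))⁻¹ * g (ω k)).prod) = (g u)⁻¹ * g v := by
      intro l u v hl
      induction hl with
      | nil => simp
      | cons k h ih => simp [ih, mul_assoc]
    have := htel _ _ _ ht
    simpa using this
end
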